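/- arXiv:0911.5452 — 5 statements merged into one kernel-verified Lean document; each statement's English description precedes it below -/
import Mathlib

section
/- If a matroid M on ground set E admits a partition of E into independent sets of sizes λ₁ ≥ λ₂ ≥ ... ≥ λₗ, and μ is a partition of |E| with μ ≤ λ in dominance order, then E also admits a partition into independent sets whose sizes are the parts of μ. -/
open Finset

/-!
Dominance order is generated by transfers of one unit from a larger part `λ p` to a smaller
later part `λ q`: if `μ ≤ λ` and `μ ≠ λ`, take `p + 1` to be the first index where the prefix sums
of `μ` and `λ` differ and `q + 1` the next index where they agree again; then
`λ q < μ q ≤ μ p < λ p`, and the transfer keeps `μ` dominated while strictly decreasing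
`∑ₖ (λ₁ + ⋯ + λₖ)`. On the matroid side, a transfer is realised by the augmentation axiom: since
the block `q` is smaller than the block `p`, some element of block `p` can be moved into block `q`
keeping both independent.
-/

section Labelling

variable {α : Type*} [Fintype α]

def fiber (π : α → ℕ) (i : ℕ) : Finset α := univ.filter (fun x => π x = i)

lemma sum_card_fiber_le (π : α → ℕ) (s : Finset ℕ) :
    ∑ i ∈ s, #(fiber π i) ≤ Fintype.card α := by
  simp only [fiber, sum_card_fiberwise_eq_card_filter]
  exact card_filter_le _ _

lemma fiber_update [DecidableEq α] (π : α → ℕ) (e : α) (q i : ℕ) :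
    fiber (Function.update π e q) i =
      if i = q then insert e (fiber π i) else (fiber π i).erase e := by
  ext x
  by_cases hx : x = e <;> split_ifs <;> simp_all [fiber, Function.update_apply, eq_comm]

lemma Matroid.exists_transfer_fiber (M : Matroid α) {π : α → ℕ}
    (hind : ∀ i, M.Indep ↑(fiber π i)) {p q : ℕ} (hlt : #(fiber π q) < #(fiber π p)) :
    ∃ π' : α → ℕ, (∀ i, M.Indep ↑(fiber π' i)) ∧
      (fun i => #(fiber π' i)) + Pi.single p 1 = (fun i => #(fiber π i)) + Pi.single q 1 := by
  classical
  have hpq : p ≠ q := by rintro rfl; exact hlt.false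
  obtain ⟨e, ⟨hep, heq⟩, hins⟩ := (hind q).augment (hind p) (by
    simpa only [Set.encard_coe_eq_coe_finsetCard] using Nat.cast_lt.mpr hlt)
  simp only [mem_coe] at hep heq
  refine ⟨Function.update π e q, fun i => ?_, funext fun i => ?_⟩
  · rw [fiber_update]
    split_ifs with hi
    · subst hi; simpa using hins
    · exact (hind i).subset (by simp)
  · by_cases hiq : i = q
    · subst hiq
      simp [fiber_update, hpq.symm, card_insert_of_notMem heq]
    by_cases hip : i = p
    · subst hip
      simp [fiber_update, hiq, card_erase_add_one hep]
    have he : e ∉ fiber π i := by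
      simp only [fiber, mem_filter, mem_univ, true_and] at hep ⊢; omega
    simp [fiber_update, hiq, hip, erase_eq_of_notMem he]

end Labelling

section Dominance

variable {lam lam' mu : ℕ → ℕ}

lemma sum_range_add_ite_of_transfer {p q : ℕ} (h : lam' + Pi.single p 1 = lam + Pi.single q 1)
    (k : ℕ) :
    ∑ i ∈ range k, lam' i + (if p < k then 1 else 0) =
      ∑ i ∈ range k, lam i + (if q < k then 1 else 0) := by
  have := congrArg (fun f => ∑ i ∈ range k, f i) h
  simpa only [Pi.add_apply, sum_add_distrib, sum_pi_single', mem_range] using this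

lemma eq_of_sum_range_eq (h : ∀ k, ∑ i ∈ range k, lam i = ∑ i ∈ range k, mu i) : lam = mu := by
  funext i
  have := h (i + 1)
  rw [sum_range_succ, sum_range_succ, h i] at this
  omega

lemma exists_transfer_of_dominates (hmu : Antitone mu)
    (hdom : ∀ k, ∑ i ∈ range k, mu i ≤ ∑ i ∈ range k, lam i) {N : ℕ}
    (hN : ∀ k, N ≤ k → ∑ i ∈ range k, lam i = ∑ i ∈ range k, mu i) (hne : lam ≠ mu) :
    ∃ p q, p < q ∧ q < N ∧ lam q < lam p ∧
      ∀ k, p < k → k ≤ q → ∑ i ∈ range k, mu i < ∑ i ∈ range k, lam i := by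
  have hex : ∃ a, ∑ i ∈ range a, mu i < ∑ i ∈ range a, lam i := by
    by_contra! h
    exact hne (eq_of_sum_range_eq fun k => le_antisymm (h k) (hdom k))
  set a := Nat.find hex
  have ha : ∑ i ∈ range a, mu i < ∑ i ∈ range a, lam i := Nat.find_spec hex
  have haN : a < N := by
    by_contra! h
    exact (hN a h).symm.not_lt ha
  have hexb : ∃ b, a ≤ b ∧ ∑ i ∈ range b, lam i = ∑ i ∈ range b, mu i := ⟨N, haN.le, hN N le_rfl⟩
  set b := Nat.find hexb
  obtain ⟨hab, hb⟩ : a ≤ b ∧ ∑ i ∈ range b, lam i = ∑ i ∈ range b, mu i := Nat.find_spec hexb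
  have hbN : b ≤ N := Nat.find_min' hexb ⟨haN.le, hN N le_rfl⟩
  have hstrict : ∀ k, a ≤ k → k < b → ∑ i ∈ range k, mu i < ∑ i ∈ range k, lam i :=
    fun k hak hkb => (hdom k).lt_of_ne fun h => Nat.find_min hexb hkb ⟨hak, h.symm⟩
  have ha0 : a ≠ 0 := by rintro h; simp [h] at ha
  have hab' : a < b := hab.lt_of_ne (by rintro h; rw [← h] at hb; omega)
  obtain ⟨p, hpa⟩ : ∃ p, a = p + 1 := Nat.exists_eq_succ_of_ne_zero ha0
  obtain ⟨q, hq⟩ : ∃ q, b = q + 1 := Nat.exists_eq_succ_of_ne_zero (by omega)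
  have hp : ∑ i ∈ range p, lam i = ∑ i ∈ range p, mu i :=
    le_antisymm (not_lt.mp (Nat.find_min hex (by omega))) (hdom p)
  have hlamp : mu p < lam p := by
    rw [hpa, sum_range_succ, sum_range_succ] at ha; omega
  have hlamq : lam q < mu q := by
    have := hstrict q (by omega) (by omega)
    rw [hq, sum_range_succ, sum_range_succ] at hb; omega
  exact ⟨p, q, by omega, by omega, by have := hmu (show p ≤ q by omega); omega,
    fun k hpk hkq => hstrict k (by omega) (by omega)⟩

lemma dominates_of_transfer {p q : ℕ} (h : lam' + Pi.single p 1 = lam + Pi.single q 1)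
    (hdom : ∀ k, ∑ i ∈ range k, mu i ≤ ∑ i ∈ range k, lam i)
    (hstrict : ∀ k, p < k → k ≤ q → ∑ i ∈ range k, mu i < ∑ i ∈ range k, lam i) (k : ℕ) :
    ∑ i ∈ range k, mu i ≤ ∑ i ∈ range k, lam' i := by
  have htr := sum_range_add_ite_of_transfer h k
  have := hdom k
  by_cases hk : p < k ∧ k ≤ q
  · have := hstrict k hk.1 hk.2
    split_ifs at htr <;> omega
  · split_ifs at htr <;> omega

lemma sum_sum_range_lt_of_transfer {p q N : ℕ} (h : lam' + Pi.single p 1 = lam + Pi.single q 1)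
    (hpq : p < q) (hqN : q < N) :
    ∑ k ∈ range N, ∑ i ∈ range k, lam' i < ∑ k ∈ range N, ∑ i ∈ range k, lam i := by
  refine sum_lt_sum (fun k _ => ?_) ⟨q, mem_range.mpr hqN, ?_⟩
  · have := sum_range_add_ite_of_transfer h k
    split_ifs at this <;> omega
  · have := sum_range_add_ite_of_transfer h q
    rw [if_pos hpq, if_neg (lt_irrefl q)] at this
    omega

end Dominance

theorem Matroid.exists_indep_fiber_of_dominates {α : Type*} [Fintype α] (M : Matroid α)
    {mu : ℕ → ℕ} (hmu : Antitone mu) {N : ℕ} (π : α → ℕ) (hind : ∀ i, M.Indep ↑(fiber π i))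
    (hdom : ∀ k, ∑ i ∈ range k, mu i ≤ ∑ i ∈ range k, #(fiber π i))
    (hN : ∀ k, N ≤ k → ∑ i ∈ range k, #(fiber π i) = ∑ i ∈ range k, mu i) :
    ∃ π' : α → ℕ, (∀ i, M.Indep ↑(fiber π' i)) ∧ ∀ i, #(fiber π' i) = mu i := by
  by_cases hne : (fun i => #(fiber π i)) = mu
  · exact ⟨π, hind, congrFun hne⟩
  obtain ⟨p, q, hpq, hqN, hlt, hstrict⟩ := exists_transfer_of_dominates hmu hdom hN hne
  obtain ⟨π', hind', htr⟩ := M.exists_transfer_fiber hind hlt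
  have hsum := sum_range_add_ite_of_transfer htr
  exact M.exists_indep_fiber_of_dominates hmu π' hind' (dominates_of_transfer htr hdom hstrict)
    fun k hk => by have := hsum k; have := hN k hk; split_ifs at * <;> omega
termination_by ∑ k ∈ range N, ∑ i ∈ range k, #(fiber π i)
decreasing_by exact sum_sum_range_lt_of_transfer htr hpq hqN

theorem partition_into_independent_of_dominated_general {α : Type*} [Fintype α]
    (M : Matroid α)
    (lam mu : ℕ → ℕ) (hmu : Antitone mu)
    (hmusum : ∑ i ∈ Finset.range (Fintype.card α), mu i = Fintype.card α)
    (hmu0 : ∀ i, Fintype.card α ≤ i → mu i = 0)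
    (hdom : ∀ k, ∑ i ∈ Finset.range k, mu i ≤ ∑ i ∈ Finset.range k, lam i)
    (hpart : ∃ π : α → ℕ,
      (∀ i, (Finset.univ.filter (fun x => π x = i)).card = lam i) ∧
      ∀ i, M.Indep ↑(Finset.univ.filter (fun x => π x = i))) :
    ∃ π : α → ℕ,
      (∀ i, (Finset.univ.filter (fun x => π x = i)).card = mu i) ∧
      ∀ i, M.Indep ↑(Finset.univ.filter (fun x => π x = i)) := by
  obtain ⟨π, hcard, hind⟩ := hpart
  replace hcard : ∀ i, #(fiber π i) = lam i := hcard
  have hN : ∀ k, Fintype.card α ≤ k → ∑ i ∈ range k, lam i = ∑ i ∈ range k, mu i := by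
    intro k hk
    have hmuk : ∑ i ∈ range k, mu i = Fintype.card α := hmusum ▸
      (sum_subset (range_subset_range.2 hk) fun i _ hi => hmu0 i (by simpa using hi)).symm
    have hlamk := sum_card_fiber_le π (range k)
    simp only [hcard] at hlamk
    have := hdom k
    omega
  obtain ⟨π', hind', hcard'⟩ := M.exists_indep_fiber_of_dominates hmu π hind
    (by simpa only [hcard] using hdom) (by simpa only [hcard] using hN)
  exact ⟨π', hcard', hind'⟩

/-- If a matroid `M` on ground set `E` admits a partition of `E` into independent sets
of sizes `λ₁ ≥ λ₂ ≥ ...`, and `μ` is a partition of `|E|` with `μ ≤ λ` in dominance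
order, then `E` also admits a partition into independent sets whose sizes are the
parts of `μ`.  Partitions of the ground set are encoded by labelling functions
`π : α → ℕ` whose fibres are the blocks. -/
theorem partition_into_independent_of_dominated {α : Type*} [Fintype α] [DecidableEq α]
    (M : Matroid α) (hE : M.E = Set.univ)
    (lam mu : ℕ → ℕ) (hlam : Antitone lam) (hmu : Antitone mu)
    (hmusum : ∑ i ∈ Finset.range (Fintype.card α), mu i = Fintype.card α)
    (hmu0 : ∀ i, Fintype.card α ≤ i → mu i = 0)
    (hdom : ∀ k, ∑ i ∈ Finset.range k, mu i ≤ ∑ i ∈ Finset.range k, lam i)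
    (hpart : ∃ π : α → ℕ,
      (∀ i, (Finset.univ.filter (fun x => π x = i)).card = lam i) ∧
      ∀ i, M.Indep ↑(Finset.univ.filter (fun x => π x = i))) :
    ∃ π : α → ℕ,
      (∀ i, (Finset.univ.filter (fun x => π x = i)).card = mu i) ∧
      ∀ i, M.Indep ↑(Finset.univ.filter (fun x => π x = i)) :=
  partition_into_independent_of_dominated_general M lam mu hmu hmusum hmu0 hdom hpart
end

section
/- For any matroid M on a finite ground set and any k ≥ 1, if ρ_k denotes the maximum, over families of k independent sets of M, of the cardinality of their union, then ρ_k - ρ_{k-1} ≤ ρ_{k-1} - ρ_{k-2} for all k ≥ 2 (with ρ₀ = 0); that is, the rank partition (ρ₁, ρ₂ - ρ₁, ρ₃ - ρ₂, ...) is a weakly decreasing sequence. -/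
open Finset

/-- A finitary matroid-like independence structure on finsets of `β`. -/
structure FM (β : Type*) [DecidableEq β] where
  ind : Finset β → Prop
  ind_empty : ind ∅
  ind_subset : ∀ ⦃A B : Finset β⦄, ind B → A ⊆ B → ind A
  ind_aug : ∀ ⦃A B : Finset β⦄, ind A → ind B → A.card < B.card →
    ∃ x ∈ B, x ∉ A ∧ ind (insert x A)

namespace FM

variable {β : Type*} [DecidableEq β] (N : FM β)

open Classical in
noncomputable def r (X : Finset β) : ℕ :=
  (X.powerset.filter fun B => N.ind B).sup Finset.card

lemma le_r {B X : Finset β} (h : N.ind B) (hBX : B ⊆ X) : B.card ≤ N.r X := by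
  classical
  exact Finset.le_sup (f := Finset.card)
    (Finset.mem_filter.mpr ⟨Finset.mem_powerset.mpr hBX, h⟩)

lemma r_le {X : Finset β} {n : ℕ} (h : ∀ B, B ⊆ X → N.ind B → B.card ≤ n) :
    N.r X ≤ n := by
  classical
  exact Finset.sup_le fun B hB => by
    obtain ⟨h1, h2⟩ := Finset.mem_filter.mp hB
    exact h B (Finset.mem_powerset.mp h1) h2

lemma exists_basis (X : Finset β) : ∃ B, B ⊆ X ∧ N.ind B ∧ B.card = N.r X := by
  classical
  obtain ⟨B, hB, hBc⟩ := Finset.exists_mem_eq_sup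
    (X.powerset.filter fun B => N.ind B) ⟨∅, Finset.mem_filter.mpr
      ⟨Finset.mem_powerset.mpr (Finset.empty_subset X), N.ind_empty⟩⟩ Finset.card
  obtain ⟨h1, h2⟩ := Finset.mem_filter.mp hB
  exact ⟨B, Finset.mem_powerset.mp h1, h2, hBc.symm⟩

lemma r_mono {X Y : Finset β} (h : X ⊆ Y) : N.r X ≤ N.r Y :=
  N.r_le fun B hB hBi => N.le_r hBi (hB.trans h)

private lemma exists_basis_superset_aux : ∀ (n : ℕ) (B X : Finset β), N.ind B → B ⊆ X →
    N.r X ≤ B.card + n → ∃ B', B ⊆ B' ∧ B' ⊆ X ∧ N.ind B' ∧ B'.card = N.r X := by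
  intro n
  induction n with
  | zero =>
    intro B X hB hBX hle
    exact ⟨B, Finset.Subset.rfl, hBX, hB, le_antisymm (N.le_r hB hBX) (by omega)⟩
  | succ n ih =>
    intro B X hB hBX hle
    by_cases h : N.r X ≤ B.card + n
    · exact ih B X hB hBX h
    · obtain ⟨B₀, hB₀X, hB₀i, hB₀c⟩ := N.exists_basis X
      obtain ⟨x, hxB₀, hxB, hxi⟩ := N.ind_aug hB hB₀i (by omega)
      have hcard : (insert x B).card = B.card + 1 := Finset.card_insert_of_notMem hxB
      obtain ⟨B', h1, h2, h3, h4⟩ := ih (insert x B) X hxi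
        (Finset.insert_subset (hB₀X hxB₀) hBX) (by omega)
      exact ⟨B', (Finset.subset_insert x B).trans h1, h2, h3, h4⟩

lemma exists_basis_superset {B X : Finset β} (hB : N.ind B) (hBX : B ⊆ X) :
    ∃ B', B ⊆ B' ∧ B' ⊆ X ∧ N.ind B' ∧ B'.card = N.r X :=
  N.exists_basis_superset_aux (N.r X) B X hB hBX (by omega)

lemma r_submod (X Y : Finset β) : N.r (X ∪ Y) + N.r (X ∩ Y) ≤ N.r X + N.r Y := by
  obtain ⟨B, hBs, hBi, hBc⟩ := N.exists_basis (X ∩ Y)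
  obtain ⟨B', hBB', hB's, hB'i, hB'c⟩ := N.exists_basis_superset hBi
    (hBs.trans (Finset.inter_subset_union))
  have h1 : (B' ∩ X).card ≤ N.r X :=
    N.le_r (N.ind_subset hB'i Finset.inter_subset_left) Finset.inter_subset_right
  have h2 : (B' ∩ Y).card ≤ N.r Y :=
    N.le_r (N.ind_subset hB'i Finset.inter_subset_left) Finset.inter_subset_right
  have hu : (B' ∩ X) ∪ (B' ∩ Y) = B' := by
    rw [← Finset.inter_union_distrib_left]
    exact Finset.inter_eq_left.mpr hB's
  have hi : (B' ∩ X) ∩ (B' ∩ Y) = B' ∩ (X ∩ Y) := by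
    ext a; simp only [Finset.mem_inter]; tauto
  have hkey := Finset.card_union_add_card_inter (B' ∩ X) (B' ∩ Y)
  rw [hu, hi] at hkey
  have hsub : B ⊆ B' ∩ (X ∩ Y) := Finset.subset_inter hBB' hBs
  have := Finset.card_le_card hsub
  omega

lemma r_insert_of_not_ind {s : β} (h : ¬ N.ind {s}) (X : Finset β) :
    N.r (insert s X) = N.r X := by
  refine le_antisymm (N.r_le fun B hB hBi => ?_) (N.r_mono (Finset.subset_insert s X))
  have hsB : s ∉ B := fun hs => h (N.ind_subset hBi (Finset.singleton_subset_iff.mpr hs))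
  exact N.le_r hBi fun x hx => by
    rcases Finset.mem_insert.mp (hB hx) with rfl | hxX
    · exact absurd hx hsB
    · exact hxX

/-- Contraction by a non-loop element. -/
def contract (s : β) (hs : N.ind {s}) : FM β where
  ind X := s ∉ X ∧ N.ind (insert s X)
  ind_empty := ⟨Finset.notMem_empty s, by simpa using hs⟩
  ind_subset := by
    rintro A B ⟨hsB, hB⟩ hAB
    exact ⟨fun h => hsB (hAB h), N.ind_subset hB (Finset.insert_subset_insert s hAB)⟩
  ind_aug := by
    rintro A B ⟨hsA, hA⟩ ⟨hsB, hB⟩ hcard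
    obtain ⟨x, hxB, hxA, hxi⟩ := N.ind_aug hA hB
      (by rw [Finset.card_insert_of_notMem hsA, Finset.card_insert_of_notMem hsB]; omega)
    have hxs : x ≠ s := fun h => hxA (h ▸ Finset.mem_insert_self s A)
    refine ⟨x, (Finset.mem_insert.mp hxB).resolve_left hxs, fun h => hxA (Finset.mem_insert_of_mem h), ?_, ?_⟩
    · simp only [Finset.mem_insert]
      push_neg
      exact ⟨fun h => hxs h.symm, hsA⟩
    · rwa [Finset.insert_comm]

lemma r_insert_le_contract_r {s : β} (hs : N.ind {s}) {X : Finset β} (hsX : s ∉ X) :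
    N.r (insert s X) ≤ (N.contract s hs).r X + 1 := by
  obtain ⟨B', hBB', hB's, hB'i, hB'c⟩ := N.exists_basis_superset hs
    (Finset.singleton_subset_iff.mpr (Finset.mem_insert_self s X))
  have hsB' : s ∈ B' := hBB' (Finset.mem_singleton_self s)
  have hind : (N.contract s hs).ind (B'.erase s) := by
    refine ⟨Finset.notMem_erase s B', ?_⟩
    rw [Finset.insert_erase hsB']
    exact hB'i
  have hsub : B'.erase s ⊆ X := by
    intro x hx
    have hxs := Finset.ne_of_mem_erase hx
    rcases Finset.mem_insert.mp (hB's (Finset.mem_of_mem_erase hx)) with rfl | h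
    · exact absurd rfl hxs
    · exact h
  have := (N.contract s hs).le_r hind hsub
  rw [Finset.card_erase_of_mem hsB'] at this
  have hpos : 0 < B'.card := Finset.card_pos.mpr ⟨s, hsB'⟩
  omega

end FM

open Finset

set_option maxHeartbeats 1600000 in
theorem inter_minmax {β : Type*} [DecidableEq β] (S : Finset β) (M₁ M₂ : FM β) :
    ∃ I U : Finset β, I ⊆ S ∧ U ⊆ S ∧ M₁.ind I ∧ M₂.ind I ∧
      M₁.r U + M₂.r (S \ U) ≤ I.card := by
  generalize hn : S.card = n
  induction n using Nat.strong_induction_on generalizing S M₁ M₂ with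
  | _ n ih =>
  rcases S.eq_empty_or_nonempty with rfl | ⟨s, hs⟩
  · refine ⟨∅, ∅, Finset.Subset.rfl, Finset.Subset.rfl, M₁.ind_empty, M₂.ind_empty, ?_⟩
    have h1 : M₁.r ∅ ≤ 0 := M₁.r_le fun B hB _ => by
      simp [Finset.subset_empty.mp hB]
    have h2 : M₂.r (∅ \ ∅) ≤ 0 := M₂.r_le fun B hB _ => by
      simp_all [Finset.subset_empty.mp (by simpa using hB)]
    simp only [Finset.card_empty]
    omega
  have hcardpos : 0 < S.card := Finset.card_pos.mpr ⟨s, hs⟩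
  have hcard_erase : (S.erase s).card = n - 1 := by
    rw [Finset.card_erase_of_mem hs]; omega
  have hlt : n - 1 < n := by omega
  by_cases h₁ : M₁.ind {s}
  · by_cases h₂ : M₂.ind {s}
    · -- both non-loops
      obtain ⟨Id, Ud, hIdS, hUdS, hId1, hId2, hd⟩ := ih (n-1) hlt (S.erase s) M₁ M₂ hcard_erase
      obtain ⟨Ic, Uc, hIcS, hUcS, hIc1, hIc2, hc⟩ :=
        ih (n-1) hlt (S.erase s) (M₁.contract s h₁) (M₂.contract s h₂) hcard_erase
      obtain ⟨hsIc, hIc1'⟩ := hIc1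
      obtain ⟨_, hIc2'⟩ := hIc2
      have hsUd : s ∉ Ud := fun h => (Finset.mem_erase.mp (hUdS h)).1 rfl
      have hsUc : s ∉ Uc := fun h => (Finset.mem_erase.mp (hUcS h)).1 rfl
      -- contraction rank bounds
      have hb1 : M₁.r (insert s Uc) ≤ (M₁.contract s h₁).r Uc + 1 :=
        M₁.r_insert_le_contract_r h₁ hsUc
      have hins : insert s (S.erase s \ Uc) = S \ Uc := by
        ext x
        simp only [Finset.mem_insert, Finset.mem_sdiff, Finset.mem_erase]
        constructor
        · rintro (rfl | ⟨⟨_, hxS⟩, hxU⟩)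
          · exact ⟨hs, hsUc⟩
          · exact ⟨hxS, hxU⟩
        · rintro ⟨hxS, hxU⟩
          by_cases hxs : x = s
          · exact Or.inl hxs
          · exact Or.inr ⟨⟨hxs, hxS⟩, hxU⟩
      have hb2 : M₂.r (S \ Uc) ≤ (M₂.contract s h₂).r (S.erase s \ Uc) + 1 := by
        rw [← hins]
        exact M₂.r_insert_le_contract_r h₂ (by simp)
      -- submodularity
      set X := Ud ∩ Uc with hX
      set Y := insert s (Ud ∪ Uc) with hY
      have hsub1 : M₁.r Y + M₁.r X ≤ M₁.r Ud + M₁.r (insert s Uc) := by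
        have h := M₁.r_submod Ud (insert s Uc)
        have e1 : Ud ∪ insert s Uc = Y := by
          rw [hY, Finset.union_insert]
        have e2 : Ud ∩ insert s Uc = X := by
          ext x
          simp only [Finset.mem_inter, Finset.mem_insert, hX]
          constructor
          · rintro ⟨hxU, rfl | hxC⟩
            · exact absurd hxU hsUd
            · exact ⟨hxU, hxC⟩
          · tauto
        rw [e1, e2] at h
        omega
      have hsub2 : M₂.r (S \ X) + M₂.r (S \ Y) ≤
          M₂.r (S.erase s \ Ud) + M₂.r (S \ Uc) := by
        have h := M₂.r_submod (S.erase s \ Ud) (S \ Uc)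
        have e1 : (S.erase s \ Ud) ∪ (S \ Uc) = S \ X := by
          ext x
          simp only [Finset.mem_union, Finset.mem_sdiff, Finset.mem_erase, hX,
            Finset.mem_inter]
          constructor
          · rintro (⟨⟨hxs, hxS⟩, hxU⟩ | ⟨hxS, hxU⟩) <;> tauto
          · rintro ⟨hxS, hxU⟩
            by_cases hxs : x = s
            · subst hxs; exact Or.inr ⟨hxS, hsUc⟩
            · tauto
        have e2 : (S.erase s \ Ud) ∩ (S \ Uc) = S \ Y := by
          ext x
          simp only [Finset.mem_inter, Finset.mem_sdiff, Finset.mem_erase, hY,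
            Finset.mem_insert, Finset.mem_union]
          tauto
        rw [e1, e2] at h
        omega
      have hXS : X ⊆ S := fun x hx =>
        Finset.mem_of_mem_erase (hUdS (Finset.mem_inter.mp hx).1)
      have hYS : Y ⊆ S := by
        rw [hY]
        refine Finset.insert_subset hs (Finset.union_subset ?_ ?_) <;>
          intro x hx
        · exact Finset.mem_of_mem_erase (hUdS hx)
        · exact Finset.mem_of_mem_erase (hUcS hx)
      have hIdS' : Id ⊆ S := hIdS.trans (Finset.erase_subset s S)
      have hIcS' : insert s Ic ⊆ S :=
        Finset.insert_subset hs (hIcS.trans (Finset.erase_subset s S))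
      have hIccard : (insert s Ic).card = Ic.card + 1 := Finset.card_insert_of_notMem hsIc
      -- combine
      have htot : (M₁.r X + M₂.r (S \ X)) + (M₁.r Y + M₂.r (S \ Y)) ≤
          Id.card + Ic.card + 2 := by omega
      by_cases hv : M₁.r X + M₂.r (S \ X) ≤ M₁.r Y + M₂.r (S \ Y)
      · by_cases hI : Ic.card + 1 ≤ Id.card
        · exact ⟨Id, X, hIdS', hXS, hId1, hId2, by omega⟩
        · exact ⟨insert s Ic, X, hIcS', hXS, hIc1', hIc2', by omega⟩
      · by_cases hI : Ic.card + 1 ≤ Id.card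
        · exact ⟨Id, Y, hIdS', hYS, hId1, hId2, by omega⟩
        · exact ⟨insert s Ic, Y, hIcS', hYS, hIc1', hIc2', by omega⟩
    · -- s is a loop of M₂
      obtain ⟨I, U, hIS, hUS, hI1, hI2, hle⟩ := ih (n-1) hlt (S.erase s) M₁ M₂ hcard_erase
      refine ⟨I, U, hIS.trans (Finset.erase_subset s S),
        hUS.trans (Finset.erase_subset s S), hI1, hI2, ?_⟩
      have hsU : s ∉ U := fun h => (Finset.mem_erase.mp (hUS h)).1 rfl
      have hins : insert s (S.erase s \ U) = S \ U := by
        ext x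
        simp only [Finset.mem_insert, Finset.mem_sdiff, Finset.mem_erase]
        constructor
        · rintro (rfl | ⟨⟨_, hxS⟩, hxU⟩)
          · exact ⟨hs, hsU⟩
          · exact ⟨hxS, hxU⟩
        · rintro ⟨hxS, hxU⟩
          by_cases hxs : x = s
          · exact Or.inl hxs
          · exact Or.inr ⟨⟨hxs, hxS⟩, hxU⟩
      rw [← hins, M₂.r_insert_of_not_ind h₂]
      exact hle
  · -- s is a loop of M₁
    obtain ⟨I, U, hIS, hUS, hI1, hI2, hle⟩ := ih (n-1) hlt (S.erase s) M₁ M₂ hcard_erase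
    refine ⟨I, insert s U, hIS.trans (Finset.erase_subset s S),
      Finset.insert_subset hs (hUS.trans (Finset.erase_subset s S)), hI1, hI2, ?_⟩
    have hsd : S \ insert s U = S.erase s \ U := by
      ext x
      simp only [Finset.mem_sdiff, Finset.mem_insert, Finset.mem_erase]
      tauto
    rw [M₁.r_insert_of_not_ind h₁, hsd]
    exact hle

section Instantiation

variable {α : Type*} [Fintype α] [DecidableEq α]

/-- The `i`-th slice of a finset of `α × Fin j`. -/
def sliceF {j : ℕ} (X : Finset (α × Fin j)) (i : Fin j) : Finset α :=
  (X.filter fun p => p.2 = i).image Prod.fst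

lemma mem_sliceF {j : ℕ} {X : Finset (α × Fin j)} {i : Fin j} {e : α} :
    e ∈ sliceF X i ↔ (e, i) ∈ X := by
  simp only [sliceF, Finset.mem_image, Finset.mem_filter]
  constructor
  · rintro ⟨⟨a, b⟩, ⟨hmem, rfl⟩, rfl⟩
    exact hmem
  · intro h
    exact ⟨(e, i), ⟨h, rfl⟩, rfl⟩

lemma card_eq_sum_sliceF {j : ℕ} (X : Finset (α × Fin j)) :
    X.card = ∑ i, (sliceF X i).card := by
  rw [Finset.card_eq_sum_card_fiberwise (f := Prod.snd) (t := Finset.univ)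
    (fun x _ => Finset.mem_univ _)]
  refine Finset.sum_congr rfl fun i _ => ?_
  rw [sliceF, Finset.card_image_of_injOn]
  intro p hp q hq h
  simp only [Finset.coe_filter, Set.mem_setOf_eq] at hp hq
  exact Prod.ext h (hp.2.trans hq.2.symm)

lemma sliceF_subset {j : ℕ} {A B : Finset (α × Fin j)} (h : A ⊆ B) (i : Fin j) :
    sliceF A i ⊆ sliceF B i := fun e he => mem_sliceF.mpr (h (mem_sliceF.mp he))

/-- Direct sum of `j` copies of a matroid `M`, on `α × Fin j`. -/
def sumFM (M : Matroid α) (j : ℕ) : FM (α × Fin j) where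
  ind X := ∀ i, M.Indep ↑(sliceF X i)
  ind_empty := by
    intro i
    convert M.empty_indep
    simp [sliceF]
  ind_subset := by
    intro A B hB hAB i
    exact (hB i).subset (by exact_mod_cast sliceF_subset hAB i)
  ind_aug := by
    intro A B hA hB hcard
    have hex : ∃ i, (sliceF A i).card < (sliceF B i).card := by
      by_contra hcon
      push_neg at hcon
      have := Finset.sum_le_sum (s := (Finset.univ : Finset (Fin j))) (fun i _ => hcon i)
      rw [← card_eq_sum_sliceF, ← card_eq_sum_sliceF] at this
      omega
    obtain ⟨i, hi⟩ := hex
    obtain ⟨e, he, hei⟩ := (hA i).augment (hB i) (by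
      rw [Set.encard_coe_eq_coe_finsetCard, Set.encard_coe_eq_coe_finsetCard]
      exact_mod_cast hi)
    obtain ⟨heB, heA⟩ := he
    have heB' : e ∈ sliceF B i := by exact_mod_cast heB
    have heA' : e ∉ sliceF A i := fun h => heA (by exact_mod_cast h)
    refine ⟨(e, i), mem_sliceF.mp heB', fun h => heA' (mem_sliceF.mpr h), ?_⟩
    intro l
    by_cases hl : l = i
    · subst hl
      have hslice : sliceF (insert (e, l) A) l = insert e (sliceF A l) := by
        ext a
        simp only [mem_sliceF, Finset.mem_insert, Prod.mk.injEq]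
        constructor
        · rintro (⟨rfl, _⟩ | h) <;> tauto
        · rintro (rfl | h) <;> tauto
      rw [hslice]
      rw [Finset.coe_insert]
      exact hei
    · have hslice : sliceF (insert (e, i) A) l = sliceF A l := by
        ext a
        simp only [mem_sliceF, Finset.mem_insert, Prod.mk.injEq]
        constructor
        · rintro (⟨rfl, h⟩ | h)
          · exact absurd h hl
          · exact h
        · tauto
      rw [hslice]
      exact hA l

/-- Partition matroid on `α × Fin j`: at most one element per `α`-fiber. -/
def partFM (α : Type*) [DecidableEq α] (j : ℕ) : FM (α × Fin j) where
  ind X := ∀ p ∈ X, ∀ q ∈ X, p.1 = q.1 → p = q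
  ind_empty := by simp
  ind_subset := fun A B hB hAB p hp q hq h => hB p (hAB hp) q (hAB hq) h
  ind_aug := by
    intro A B hA hB hcard
    have hA' : (A.image Prod.fst).card = A.card :=
      Finset.card_image_of_injOn fun p hp q hq h => hA p hp q hq h
    have hB' : (B.image Prod.fst).card = B.card :=
      Finset.card_image_of_injOn fun p hp q hq h => hB p hp q hq h
    have hns : ¬ (B.image Prod.fst ⊆ A.image Prod.fst) := fun h => by
      have := Finset.card_le_card h; omega
    obtain ⟨e, heB, heA⟩ := Finset.not_subset.mp hns
    obtain ⟨p, hpB, rfl⟩ := Finset.mem_image.mp heB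
    refine ⟨p, hpB, fun hpA => heA (Finset.mem_image_of_mem _ hpA), ?_⟩
    intro q hq r hr hqr
    rcases Finset.mem_insert.mp hq with rfl | hq' <;>
      rcases Finset.mem_insert.mp hr with rfl | hr'
    · rfl
    · exact absurd (Finset.mem_image_of_mem Prod.fst hr') (by rw [← hqr]; exact heA)
    · exact absurd (Finset.mem_image_of_mem Prod.fst hq') (by rw [hqr]; exact heA)
    · exact hA q hq' r hr' hqr

/-- The independence structure of a matroid as an `FM`. -/
def ofMatroid (M : Matroid α) : FM α where
  ind X := M.Indep ↑X
  ind_empty := by simpa using M.empty_indep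
  ind_subset := fun A B hB hAB => hB.subset (by exact_mod_cast hAB)
  ind_aug := by
    intro A B hA hB hcard
    obtain ⟨e, he, hei⟩ := hA.augment hB (by
      rw [Set.encard_coe_eq_coe_finsetCard, Set.encard_coe_eq_coe_finsetCard]
      exact_mod_cast hcard)
    obtain ⟨heB, heA⟩ := he
    exact ⟨e, by exact_mod_cast heB, fun h => heA (by exact_mod_cast h),
      by show M.Indep ↑(insert e A); rw [Finset.coe_insert]; exact hei⟩

/-- Weak direction: any union of `j` independent sets has size at most
`|Xᶜ| + j * r(X)`. -/
lemma union_card_le (M : Matroid α) {j : ℕ} (F : Fin j → Finset α)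
    (hF : ∀ i, M.Indep ↑(F i)) (X : Finset α) :
    (Finset.univ.biUnion F).card ≤ Xᶜ.card + j * (ofMatroid M).r X := by
  have hsub : Finset.univ.biUnion F ⊆ Xᶜ ∪ Finset.univ.biUnion (fun i => F i ∩ X) := by
    intro e he
    obtain ⟨i, _, hei⟩ := Finset.mem_biUnion.mp he
    by_cases hx : e ∈ X
    · exact Finset.mem_union_right _ (Finset.mem_biUnion.mpr
        ⟨i, Finset.mem_univ i, Finset.mem_inter.mpr ⟨hei, hx⟩⟩)
    · exact Finset.mem_union_left _ (Finset.mem_compl.mpr hx)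
  calc (Finset.univ.biUnion F).card
      ≤ (Xᶜ ∪ Finset.univ.biUnion (fun i => F i ∩ X)).card := Finset.card_le_card hsub
    _ ≤ Xᶜ.card + (Finset.univ.biUnion (fun i => F i ∩ X)).card := Finset.card_union_le _ _
    _ ≤ Xᶜ.card + ∑ i, (F i ∩ X).card := by
        have := Finset.card_biUnion_le (s := (Finset.univ : Finset (Fin j)))
          (t := fun i => F i ∩ X)
        omega
    _ ≤ Xᶜ.card + ∑ _i : Fin j, (ofMatroid M).r X := by
        gcongr with i
        refine (ofMatroid M).le_r ?_ Finset.inter_subset_right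
        exact (hF i).subset (by exact_mod_cast (Finset.inter_subset_left (s₂ := X)))
    _ = Xᶜ.card + j * (ofMatroid M).r X := by
        rw [Finset.sum_const, Finset.card_univ, Fintype.card_fin, smul_eq_mul]

/-- Strong direction: there is a set `X` with `|Xᶜ| + j * r(X)` at most the
maximum size of a union of `j` independent sets. -/
lemma exists_cover_set (M : Matroid α) (j : ℕ) (ρ : ℕ)
    (hub : ∀ m, (∃ F : Fin j → Finset α, (∀ i, M.Indep ↑(F i)) ∧
      (Finset.univ.biUnion F).card = m) → m ≤ ρ) :
    ∃ X : Finset α, Xᶜ.card + j * (ofMatroid M).r X ≤ ρ := by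
  obtain ⟨I, U, _, _, hI1, hI2, hle⟩ :=
    inter_minmax (Finset.univ : Finset (α × Fin j)) (sumFM M j) (partFM α j)
  -- the slices of I form a family of j independent sets with union of size I.card
  have hdisj : ∀ i₁ ∈ (Finset.univ : Finset (Fin j)), ∀ i₂ ∈ Finset.univ, i₁ ≠ i₂ →
      Disjoint (sliceF I i₁) (sliceF I i₂) := by
    intro i₁ _ i₂ _ hne
    rw [Finset.disjoint_left]
    intro e he1 he2
    have := hI2 (e, i₁) (mem_sliceF.mp he1) (e, i₂) (mem_sliceF.mp he2) rfl
    exact hne (congrArg Prod.snd this)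
  have hcard : (Finset.univ.biUnion (sliceF I)).card = I.card := by
    rw [Finset.card_biUnion hdisj, ← card_eq_sum_sliceF]
  have hIρ : I.card ≤ ρ := hub I.card ⟨sliceF I, hI1, hcard⟩
  -- define X
  set X : Finset α := Finset.univ.filter (fun e => ∀ i : Fin j, (e, i) ∈ U) with hXdef
  refine ⟨X, ?_⟩
  have hXmem : ∀ e, e ∈ X ↔ ∀ i : Fin j, (e, i) ∈ U := by
    intro e; simp [hXdef]
  -- (A) : j * r(X) ≤ r₁(U)
  have hA : j * (ofMatroid M).r X ≤ (sumFM M j).r U := by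
    obtain ⟨B, hBX, hBi, hBc⟩ := (ofMatroid M).exists_basis X
    have hCU : B ×ˢ (Finset.univ : Finset (Fin j)) ⊆ U := by
      intro p hp
      obtain ⟨hp1, _⟩ := Finset.mem_product.mp hp
      exact (hXmem p.1).mp (hBX hp1) p.2
    have hCslice : ∀ i, sliceF (B ×ˢ (Finset.univ : Finset (Fin j))) i = B := by
      intro i
      ext e
      rw [mem_sliceF, Finset.mem_product]
      simp
    have hCind : (sumFM M j).ind (B ×ˢ (Finset.univ : Finset (Fin j))) := by
      intro i
      rw [hCslice]
      exact hBi
    have := (sumFM M j).le_r hCind hCU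
    rw [Finset.card_product, Finset.card_univ, Fintype.card_fin] at this
    rw [mul_comm]
    rwa [hBc] at this
  -- (B) : |Xᶜ| ≤ r₂(univ \ U)
  have hB : Xᶜ.card ≤ (partFM α j).r (Finset.univ \ U) := by
    have hex : ∀ e ∈ Xᶜ, ∃ i : Fin j, (e, i) ∉ U := by
      intro e he
      by_contra hcon
      push_neg at hcon
      exact (Finset.mem_compl.mp he) ((hXmem e).mpr hcon)
    set D : Finset (α × Fin j) :=
      Xᶜ.attach.image (fun (x : {a // a ∈ Xᶜ}) => (x.1, (hex x.1 x.2).choose)) with hDdef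
    have hDcard : D.card = Xᶜ.card := by
      rw [hDdef, Finset.card_image_of_injOn, Finset.card_attach]
      intro a _ b _ h
      exact Subtype.ext (congrArg Prod.fst h)
    have hDind : (partFM α j).ind D := by
      intro p hp q hq h
      obtain ⟨a, _, rfl⟩ := Finset.mem_image.mp hp
      obtain ⟨b, _, rfl⟩ := Finset.mem_image.mp hq
      have hab : a = b := Subtype.ext (by simpa using h)
      rw [hab]
    have hDsub : D ⊆ Finset.univ \ U := by
      intro p hp
      obtain ⟨a, _, rfl⟩ := Finset.mem_image.mp hp
      exact Finset.mem_sdiff.mpr ⟨Finset.mem_univ _, (hex a.1 a.2).choose_spec⟩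
    have := (partFM α j).le_r hDind hDsub
    omega
  omega
end Instantiation

/-- For a matroid `M` on a finite ground set, let `ρ k` be the maximum size of the
union of `k` independent sets of `M` (so `ρ 0 = 0`).  Then for all `k ≥ 2`,
`ρ k - ρ (k-1) ≤ ρ (k-1) - ρ (k-2)`; that is, the rank partition
`(ρ₁, ρ₂ - ρ₁, ρ₃ - ρ₂, ...)` is a weakly decreasing sequence. -/
theorem rank_partition_antitone {α : Type*} [Fintype α] [DecidableEq α]
    (M : Matroid α) (rho : ℕ → ℕ)
    (hrho : ∀ k, IsGreatest
      {m | ∃ I : Fin k → Finset α, (∀ i, M.Indep ↑(I i)) ∧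
        (Finset.univ.biUnion I).card = m} (rho k)) :
    ∀ k, 2 ≤ k → (rho k : ℤ) - rho (k - 1) ≤ (rho (k - 1) : ℤ) - rho (k - 2) := by
  intro k hk
  obtain ⟨m, rfl⟩ : ∃ m, k = m + 2 := ⟨k - 2, by omega⟩
  have e1 : m + 2 - 1 = m + 1 := rfl
  have e2 : m + 2 - 2 = m := rfl
  rw [e1, e2]
  -- strong direction at m+1
  obtain ⟨X, hX⟩ := exists_cover_set M (m + 1) (rho (m + 1)) (fun n hn => (hrho (m + 1)).2 hn)
  -- weak direction at m+2 and m
  have hw2 : rho (m + 2) ≤ Xᶜ.card + (m + 2) * (ofMatroid M).r X := by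
    obtain ⟨F, hF, hFc⟩ := (hrho (m + 2)).1
    rw [← hFc]
    exact union_card_le M F hF X
  have hw0 : rho m ≤ Xᶜ.card + m * (ofMatroid M).r X := by
    obtain ⟨F, hF, hFc⟩ := (hrho m).1
    rw [← hFc]
    exact union_card_le M F hF X
  have key : rho (m + 2) + rho m ≤ 2 * rho (m + 1) := by
    calc rho (m + 2) + rho m
        ≤ (Xᶜ.card + (m + 2) * (ofMatroid M).r X) + (Xᶜ.card + m * (ofMatroid M).r X) := by
          omega
      _ = 2 * (Xᶜ.card + (m + 1) * (ofMatroid M).r X) := by ring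
      _ ≤ 2 * rho (m + 1) := by omega
  omega
end

section
/- Let M be a matroid on the linearly ordered finite set {1, 2, ..., n}. If D is a dependent set not containing 1 that contains at least two distinct circuits, then for every e ∈ D the set (D \ {e}) ∪ {1} is dependent. -/
/-- A circuit of a matroid is a minimal dependent set. -/
def Matroid.IsCircuit' {α : Type*} (M : Matroid α) (C : Set α) : Prop :=
  M.Dep C ∧ ∀ D ⊂ C, M.Indep D

open Set

namespace Matroid

variable {α : Type*} {M : Matroid α} {C C₁ C₂ X : Set α}

lemma IsCircuit'.isCircuit (hC : M.IsCircuit' C) : M.IsCircuit C :=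
  isCircuit_iff_forall_ssubset.2 ⟨hC.1, fun _ hIC ↦ hC.2 _ hIC⟩

lemma dep_sdiff_singleton_of_isCircuit_ne (hC₁ : M.IsCircuit C₁) (hC₂ : M.IsCircuit C₂)
    (hne : C₁ ≠ C₂) (hC₁X : C₁ ⊆ X) (hC₂X : C₂ ⊆ X) (hXE : X ⊆ M.E) (e : α) :
    M.Dep (X \ {e}) := by
  obtain ⟨C, hCsub, hC⟩ := hC₁.elimination hC₂ hne e
  exact hC.dep.superset (hCsub.trans (sdiff_subset_sdiff_left (union_subset hC₁X hC₂X)))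
    (sdiff_subset.trans hXE)

end Matroid

theorem insert_least_diff_dep_of_two_circuits_general {n : ℕ} [NeZero n]
    (M : Matroid (Fin n)) (hE : M.E = Set.univ) (D : Set (Fin n))
    (C₁ C₂ : Set (Fin n)) (hC₁ : M.IsCircuit' C₁)
    (hC₂ : M.IsCircuit' C₂) (hC₁D : C₁ ⊆ D) (hC₂D : C₂ ⊆ D) (hne : C₁ ≠ C₂) :
    ∀ e ∈ D, M.Dep ((D \ {e}) ∪ {(0 : Fin n)}) := by
  intro e _
  have hground (X : Set (Fin n)) : X ⊆ M.E := hE ▸ subset_univ X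
  exact (M.dep_sdiff_singleton_of_isCircuit_ne hC₁.isCircuit hC₂.isCircuit hne hC₁D hC₂D
    (hground D) e).superset subset_union_left (hground _)

/-- Let `M` be a matroid on the linearly ordered finite set `{1, 2, ..., n}`
(modelled as `Fin n`, whose least element `0` plays the role of `1`). If `D` is a
dependent set not containing the least element that contains at least two distinct
circuits, then for every `e ∈ D` the set `(D \ {e}) ∪ {1}` is dependent. -/
theorem insert_least_diff_dep_of_two_circuits {n : ℕ} [NeZero n]
    (M : Matroid (Fin n)) (hE : M.E = Set.univ) (D : Set (Fin n)) (hD : M.Dep D)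
    (h0 : (0 : Fin n) ∉ D) (C₁ C₂ : Set (Fin n)) (hC₁ : M.IsCircuit' C₁)
    (hC₂ : M.IsCircuit' C₂) (hC₁D : C₁ ⊆ D) (hC₂D : C₂ ⊆ D) (hne : C₁ ≠ C₂) :
    ∀ e ∈ D, M.Dep ((D \ {e}) ∪ {(0 : Fin n)}) :=
  insert_least_diff_dep_of_two_circuits_general M hE D C₁ C₂ hC₁ hC₂ hC₁D hC₂D hne
end

section
/- Let M be a matroid realizable over ℂ via f: E → V with |E| = n. If every set partition of E into parts of sizes given by the partition λ ⊢ n includes a dependent part, then applying the Young symmetrizer c_T of any tableau T of shape λ with content (1,...,1) to the tensor f(e₁) ⊗ ... ⊗ f(e_n) (acting by place permutation) yields zero. -/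
open scoped Classical TensorProduct

/-- A bijective tableau of shape `lam` (a tableau of content `(1,...,1)`) filled with
the `n` letters: the letter `x` occupies the cell `(rowOf x, colOf x)`. -/
structure BijTableau (n : ℕ) (lam : ℕ → ℕ) where
  rowOf : Fin n → ℕ
  colOf : Fin n → ℕ
  inj : Function.Injective fun x => (rowOf x, colOf x)
  cell_mem : ∀ x, colOf x < lam (rowOf x)
  full : ∀ i j, j < lam i → ∃ x, rowOf x = i ∧ colOf x = j

/-!
Take the row `r` of `T` which, viewed as a part of the set partition of the letters into rows,
is dependent. For each fixed column permutation `τ`, the signed sum over the row stabilizer is a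
multilinear function of the vectors which vanishes as soon as two letters of row `r` carry the
same vector (left multiplication by their transposition is a sign-reversing involution on the
row stabilizer). Such a multilinear function kills every family that is linearly dependent on
row `r`: substitute the dependence relation into one slot and expand.
-/

open Equiv Finset

theorem sum_sign_smul_comp_eq_zero_of_apply_eq {ι κ X R M : Type*} [Fintype ι] [DecidableEq ι]
    [Ring R] [AddCommGroup M] [Module R M] (p : ι → κ)
    [DecidablePred fun σ : Perm ι => ∀ z, p (σ z) = p z] (Ψ : (ι → X) → M) {u : ι → X}
    {x y : ι} (hxy : x ≠ y) (hp : p x = p y) (hu : u x = u y) :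
    ∑ σ ∈ univ.filter (fun σ : Perm ι => ∀ z, p (σ z) = p z),
      ((Perm.sign σ : ℤ) : R) • Ψ (u ∘ σ) = 0 := by
  have hswap_p : ∀ z, p (swap x y z) = p z := fun z => by
    rcases eq_or_ne z x with rfl | hzx
    · simp [hp]
    rcases eq_or_ne z y with rfl | hzy
    · simp [hp]
    rw [swap_apply_of_ne_of_ne hzx hzy]
  have hswap_u : u ∘ swap x y = u := by
    rw [comp_swap_eq_update, ← hu, (Function.update_eq_self_iff (f := u) (a := y)).mpr hu,
      Function.update_eq_self]
  refine sum_involution (fun σ _ => swap x y * σ) (fun σ _ => ?_) (fun σ _ _ => ?_)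
    (fun σ hσ => ?_) (fun σ _ => swap_mul_self_mul x y σ)
  · rw [Perm.sign_mul, Perm.sign_swap hxy, Perm.coe_mul, ← Function.comp_assoc, hswap_u]
    simp
  · simpa [mul_eq_right, swap_eq_one_iff] using hxy
  · simpa only [mem_filter, mem_univ, true_and, Perm.coe_mul, Function.comp_apply, hswap_p]
      using hσ

theorem MultilinearMap.map_eq_zero_of_not_linearIndependent {ι K V M : Type*} [DecidableEq ι]
    [DivisionRing K] [AddCommGroup V] [Module K V] [AddCommGroup M] [Module K M]
    (Φ : MultilinearMap K (fun _ : ι => V) M) {S : Set ι}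
    (hΦ : ∀ u : ι → V, ∀ x ∈ S, ∀ y ∈ S, x ≠ y → u x = u y → Φ u = 0) {u : ι → V}
    (hu : ¬ LinearIndependent K (fun x : S => u x)) : Φ u = 0 := by
  obtain ⟨s, g, hsum, x₀, hx₀s, hgx₀⟩ := not_linearIndependent_iff.mp hu
  have hexpand : Φ (Function.update u x₀ (∑ x ∈ s, g x • u x)) = g x₀ • Φ u := by
    rw [Φ.map_update_sum, ← add_sum_erase s _ hx₀s, Φ.map_update_smul, Function.update_eq_self]
    refine add_eq_left.mpr (sum_eq_zero fun x hx => ?_)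
    have hne : (x : ι) ≠ x₀ := fun h => ne_of_mem_erase hx (Subtype.ext h)
    rw [Φ.map_update_smul, hΦ _ x₀ x₀.2 x x.2 hne.symm (by simp [Function.update_of_ne hne]),
      smul_zero]
  rw [hsum, Φ.map_update_zero] at hexpand
  exact (smul_eq_zero.mp hexpand.symm).resolve_left hgx₀

theorem sum_sign_smul_tprod_eq_zero_of_not_linearIndependent {ι κ K V : Type*} [Fintype ι]
    [DecidableEq ι] [Field K] [AddCommGroup V] [Module K V] (p : ι → κ)
    [DecidablePred fun σ : Perm ι => ∀ z, p (σ z) = p z] (τ : Perm ι)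
    {u : ι → V} {r : κ} (hu : ¬ LinearIndependent K (fun x : {x | p x = r} => u x)) :
    ∑ σ ∈ univ.filter (fun σ : Perm ι => ∀ z, p (σ z) = p z),
      ((Perm.sign σ : ℤ) : K) • PiTensorProduct.tprod K (fun i => u (σ (τ i))) = 0 := by
  let Φ : MultilinearMap K (fun _ : ι => V) (PiTensorProduct K fun _ : ι => V) :=
    ∑ σ ∈ univ.filter (fun σ : Perm ι => ∀ z, p (σ z) = p z),
      ((Perm.sign σ : ℤ) : K) • (PiTensorProduct.tprod K).domDomCongr (τ.trans σ)
  have hΦ : ∀ w, Φ w = ∑ σ ∈ univ.filter (fun σ : Perm ι => ∀ z, p (σ z) = p z),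
      ((Perm.sign σ : ℤ) : K) • PiTensorProduct.tprod K (fun i => w (σ (τ i))) := fun w => by
    simp [Φ]
  rw [← hΦ]
  refine Φ.map_eq_zero_of_not_linearIndependent (fun w x hx y hy hxy hw => ?_) hu
  rw [hΦ]
  exact sum_sign_smul_comp_eq_zero_of_apply_eq p
    (fun w => PiTensorProduct.tprod K (fun i => w (τ i))) hxy (hx.trans hy.symm) hw

theorem BijTableau.card_filter_rowOf_eq {n : ℕ} {lam : ℕ → ℕ} (T : BijTableau n lam) (i : ℕ) :
    #(univ.filter (fun x => T.rowOf x = i)) = lam i := by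
  rw [← card_range (lam i)]
  refine card_bij (fun x _ => T.colOf x) (fun x hx => ?_) (fun x hx y hy hxy => ?_) (fun j hj => ?_)
  · rw [mem_filter] at hx
    simpa [hx.2] using T.cell_mem x
  · rw [mem_filter] at hx hy
    exact T.inj (Prod.ext (hx.2.trans hy.2.symm) hxy)
  · obtain ⟨x, hrow, hcol⟩ := T.full i j (mem_range.mp hj)
    exact ⟨x, by simp [hrow], hcol⟩

theorem youngSym_annihilates_of_partition_dependent_general {n : ℕ} {V : Type*}
    [AddCommGroup V] [Module ℂ V] (M : Matroid (Fin n))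
    (f : Fin n → V)
    (hreal : ∀ I : Set (Fin n), M.Indep I ↔ LinearIndependent ℂ (fun x : I => f x))
    (lam : ℕ → ℕ) (T : BijTableau n lam)
    (hdep : ∀ π : Fin n → ℕ,
      (∀ i, (Finset.univ.filter (fun x => π x = i)).card = lam i) →
      ∃ i, ¬ M.Indep {x | π x = i}) :
    ∑ σ ∈ Finset.univ.filter
        (fun σ : Equiv.Perm (Fin n) => ∀ x, T.rowOf (σ x) = T.rowOf x),
      ∑ τ ∈ Finset.univ.filter
          (fun τ : Equiv.Perm (Fin n) => ∀ x, T.colOf (τ x) = T.colOf x),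
        ((Equiv.Perm.sign σ : ℤ) : ℂ) •
          PiTensorProduct.tprod ℂ (fun i : Fin n => f (σ (τ i))) = 0 := by
  obtain ⟨r, hr⟩ := hdep T.rowOf T.card_filter_rowOf_eq
  rw [hreal] at hr
  rw [sum_comm]
  exact sum_eq_zero fun τ _ =>
    sum_sign_smul_tprod_eq_zero_of_not_linearIndependent T.rowOf τ hr

/-- Let `M` be a matroid on `{1,...,n}` realized over `ℂ` by the vectors `f i ∈ V`.
If every set partition of the ground set into parts of sizes given by the partition
`λ ⊢ n` includes a dependent part, then applying the Young symmetrizer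
`c_T = (Σ_{σ ∈ R_T} sgn(σ)σ)(Σ_{τ ∈ C_T} τ)` of any tableau `T` of shape `λ` with
content `(1,...,1)` to the tensor `f 1 ⊗ ... ⊗ f n` (acting on the right by place
permutation) yields zero. -/
theorem youngSym_annihilates_of_partition_dependent {n : ℕ} {V : Type*}
    [AddCommGroup V] [Module ℂ V] (M : Matroid (Fin n)) (hE : M.E = Set.univ)
    (f : Fin n → V)
    (hreal : ∀ I : Set (Fin n), M.Indep I ↔ LinearIndependent ℂ (fun x : I => f x))
    (lam : ℕ → ℕ) (hlam : Antitone lam) (T : BijTableau n lam)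
    (hdep : ∀ π : Fin n → ℕ,
      (∀ i, (Finset.univ.filter (fun x => π x = i)).card = lam i) →
      ∃ i, ¬ M.Indep {x | π x = i}) :
    ∑ σ ∈ Finset.univ.filter
        (fun σ : Equiv.Perm (Fin n) => ∀ x, T.rowOf (σ x) = T.rowOf x),
      ∑ τ ∈ Finset.univ.filter
          (fun τ : Equiv.Perm (Fin n) => ∀ x, T.colOf (τ x) = T.colOf x),
        ((Equiv.Perm.sign σ : ℤ) : ℂ) •
          PiTensorProduct.tprod ℂ (fun i : Fin n => f (σ (τ i))) = 0 :=
  youngSym_annihilates_of_partition_dependent_general M f hreal lam T hdep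
end

section
/- Let M be a matroid on {1,...,n} of rank r with no loops. Then the number of nbc sets of M of size k containing the element 1 equals the number of nbc bases of the truncation of M to rank k, for every 1 ≤ k ≤ r. -/
/-- `S` contains no broken circuit of `M`: for every circuit `C` with minimum element
`e`, the broken circuit `C \ {e}` is not a subset of `S`. -/
def Nbc {α : Type*} [LinearOrder α] (M : Matroid α) (S : Set α) : Prop :=
  ∀ C (e : α), M.IsCircuit' C → e ∈ C → (∀ x ∈ C, e ≤ x) → ¬ C \ {e} ⊆ S

lemma Matroid.isCircuit'_iff {α : Type*} {M : Matroid α} {C : Set α} :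
    M.IsCircuit' C ↔ M.IsCircuit C :=
  isCircuit_iff_forall_ssubset.symm

section LinearOrder

variable {α : Type*} [LinearOrder α] {C D S : Set α} {d e : α}

lemma Set.Finite.exists_isLeast (hs : S.Finite) (hne : S.Nonempty) : ∃ a, IsLeast S a :=
  let ⟨a, ha, hmin⟩ := S.exists_min_image id hs hne
  ⟨a, ha, hmin⟩

lemma IsLeast.sdiff_singleton_subset_sdiff_singleton (hD : IsLeast D d) (hC : IsLeast C e)
    (hDC : D ⊆ C) : D \ {d} ⊆ C \ {e} := by
  rintro x ⟨hxD, hxd⟩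
  refine ⟨hDC hxD, fun hxe => hxd ?_⟩
  rw [Set.mem_singleton_iff] at hxe ⊢
  subst hxe
  exact le_antisymm (hC.2 (hDC hD.1)) (hD.2 hxD)

lemma IsLeast.not_sdiff_singleton_subset_of_ncard_lt [OrderBot α] (hC : IsLeast C e)
    (hS : S.Finite) (hbot : ⊥ ∈ S) (hlt : S.ncard < C.ncard) : ¬ C \ {e} ⊆ S := by
  intro hsub
  have hcard : S.ncard ≤ (C \ {e}).ncard := by
    rw [Set.ncard_sdiff_singleton_of_mem hC.1]
    omega
  obtain rfl : C \ {e} = S := Set.eq_of_subset_of_ncard_le hsub hcard hS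
  obtain ⟨hbotC, hbote⟩ := hbot
  exact hbote (le_bot_iff.1 (hC.2 hbotC)).symm

end LinearOrder

namespace Nbc

variable {α : Type*} [LinearOrder α] {M : Matroid α} {B D S : Set α} {d : α}

lemma not_sdiff_singleton_subset_of_dep [Finite α] (h : Nbc M S) (hD : M.Dep D)
    (hd : IsLeast D d) : ¬ D \ {d} ⊆ S := by
  obtain ⟨C, hCD, hC⟩ := hD.exists_isCircuit_subset
  obtain ⟨e, he⟩ := (Set.toFinite C).exists_isLeast hC.nonempty
  exact fun hsub => h C e (Matroid.isCircuit'_iff.2 hC) he.1 he.2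
    ((he.sdiff_singleton_subset_sdiff_singleton hd hCD).trans hsub)

lemma indep [Finite α] (h : Nbc M S) (hSE : S ⊆ M.E) : M.Indep S := by
  by_contra hS
  have hdep : M.Dep S := (M.not_indep_iff hSE).1 hS
  obtain ⟨d, hd⟩ := (Set.toFinite S).exists_isLeast hdep.nonempty
  exact h.not_sdiff_singleton_subset_of_dep hdep hd Set.sdiff_subset

lemma bot_mem_of_isBase [OrderBot α] (h : Nbc M B) (hB : M.IsBase B) (hbot : (⊥ : α) ∈ M.E) :
    ⊥ ∈ B := by
  by_contra hbotB
  refine h (M.fundCircuit ⊥ B) ⊥ (Matroid.isCircuit'_iff.2 (hB.fundCircuit_isCircuit hbot hbotB))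
    (M.mem_fundCircuit ⊥ B) (fun x _ => bot_le) ?_
  exact Set.sdiff_singleton_subset_iff.2 (M.fundCircuit_subset_insert ⊥ B)

end Nbc

namespace Matroid

variable {α : Type*} {M T : Matroid α} {k : ℕ} {B C S : Set α}

/-- Since `ncard` is `0` on infinite sets, this is the truncation of `M` to rank `k` only when `α`
is finite. -/
def IsTruncation (T M : Matroid α) (k : ℕ) : Prop :=
  T.E = M.E ∧ ∀ I, T.Indep I ↔ M.Indep I ∧ I.ncard ≤ k

namespace IsTruncation

variable (hT : T.IsTruncation M k)
include hT

lemma dep_or_lt_ncard (hC : T.Dep C) : M.Dep C ∨ k < C.ncard := by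
  by_cases hCM : M.Indep C
  · exact .inr (not_le.1 fun hCk => hC.not_indep ((hT.2 C).2 ⟨hCM, hCk⟩))
  · exact .inl ((M.not_indep_iff (hT.1 ▸ hC.subset_ground)).1 hCM)

variable [Finite α]

lemma isBase_iff (hk : ∀ B, M.IsBase B → k ≤ B.ncard) :
    T.IsBase B ↔ M.Indep B ∧ B.ncard = k := by
  constructor
  · intro hB
    obtain ⟨hBM, hBk⟩ := (hT.2 B).1 hB.indep
    refine ⟨hBM, hBk.antisymm (not_lt.1 fun hlt => ?_)⟩
    have hBnot : ¬ M.IsBase B := fun hMB => (hk B hMB).not_gt hlt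
    obtain ⟨B₀, hB₀⟩ := M.exists_isBase
    obtain ⟨x, hxB, hxM⟩ := hBM.exists_insert_of_not_isBase hBnot hB₀
    have hxT : T.Indep (insert x B) := (hT.2 _).2
      ⟨hxM, by rw [Set.ncard_insert_of_notMem hxB.2 (Set.toFinite B)]; omega⟩
    exact hxB.2 ((hB.eq_of_subset_indep hxT (Set.subset_insert x B)) ▸ Set.mem_insert x B)
  · rintro ⟨hBM, rfl⟩
    refine ((hT.2 B).2 ⟨hBM, le_rfl⟩).isBase_of_maximal fun J hJ hBJ => ?_
    exact Set.eq_of_subset_of_ncard_le hBJ ((hT.2 J).1 hJ).2 (Set.toFinite J)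

lemma isCircuit_of_isCircuit (hC : M.IsCircuit C) (hCk : C.ncard ≤ k) : T.IsCircuit C := by
  refine isCircuit_iff_forall_ssubset.2 ⟨?_, fun I hIC => ?_⟩
  · rw [← not_indep_iff (hT.1 ▸ hC.subset_ground), hT.2]
    exact fun hCT => hC.not_indep hCT.1
  · exact (hT.2 I).2 ⟨hC.ssubset_indep hIC, (Set.ncard_lt_ncard hIC (Set.toFinite C)).le.trans hCk⟩

variable [LinearOrder α] [OrderBot α]

lemma nbc_iff (hS : S.ncard = k) (hbot : ⊥ ∈ S) : Nbc T S ↔ Nbc M S := by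
  constructor
  · intro h C e hC he hmin
    by_cases hCk : C.ncard ≤ k
    · exact h C e (isCircuit'_iff.2 (hT.isCircuit_of_isCircuit (isCircuit'_iff.1 hC) hCk)) he hmin
    · exact IsLeast.not_sdiff_singleton_subset_of_ncard_lt ⟨he, hmin⟩ (Set.toFinite S) hbot
        (hS ▸ not_le.1 hCk)
  · intro h C e hC he hmin
    rcases hT.dep_or_lt_ncard hC.1 with hCM | hlt
    · exact h.not_sdiff_singleton_subset_of_dep hCM ⟨he, hmin⟩
    · exact IsLeast.not_sdiff_singleton_subset_of_ncard_lt ⟨he, hmin⟩ (Set.toFinite S) hbot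
        (hS ▸ hlt)

lemma isBase_and_nbc_iff (hk : ∀ B, M.IsBase B → k ≤ B.ncard) (hE : M.E = Set.univ) :
    T.IsBase S ∧ Nbc T S ↔ S.ncard = k ∧ ⊥ ∈ S ∧ Nbc M S := by
  constructor
  · rintro ⟨hB, h⟩
    have hS := ((hT.isBase_iff hk).1 hB).2
    have hbotS := h.bot_mem_of_isBase hB (hT.1 ▸ hE ▸ Set.mem_univ _)
    exact ⟨hS, hbotS, (hT.nbc_iff hS hbotS).1 h⟩
  · rintro ⟨hS, hbotS, h⟩
    exact ⟨(hT.isBase_iff hk).2 ⟨h.indep (hE ▸ Set.subset_univ S), hS⟩, (hT.nbc_iff hS hbotS).2 h⟩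

end IsTruncation

end Matroid

theorem nbc_sets_eq_nbc_bases_of_truncation_general {n : ℕ} [NeZero n]
    (M : Matroid (Fin n)) (hE : M.E = Set.univ)
    (r k : ℕ) (hr : ∀ B, M.IsBase B → B.ncard = r) (hkr : k ≤ r)
    (T : Matroid (Fin n)) (hTE : T.E = Set.univ)
    (hTindep : ∀ I, T.Indep I ↔ M.Indep I ∧ I.ncard ≤ k) :
    {S : Set (Fin n) | S.ncard = k ∧ (0 : Fin n) ∈ S ∧ Nbc M S}.ncard =
      {B : Set (Fin n) | T.IsBase B ∧ Nbc T B}.ncard := by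
  have hT : T.IsTruncation M k := ⟨hTE.trans hE.symm, hTindep⟩
  have hk : ∀ B, M.IsBase B → k ≤ B.ncard := fun B hB => (hr B hB).symm ▸ hkr
  congr 1
  ext S
  rw [← bot_eq_zero]
  exact (hT.isBase_and_nbc_iff hk hE).symm

/-- Let `M` be a loopless matroid on `{1,...,n}` (modelled as `Fin n`, with least
element `0` playing the role of `1`) of rank `r`, and let `T` be the truncation of
`M` to rank `k` (the matroid whose independent sets are the independent sets of `M`
of size at most `k`), where `1 ≤ k ≤ r`.  Then the number of nbc sets of `M` of size
`k` containing the least element equals the number of nbc bases of `T`. -/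
theorem nbc_sets_eq_nbc_bases_of_truncation {n : ℕ} [NeZero n]
    (M : Matroid (Fin n)) (hE : M.E = Set.univ)
    (hloopless : ∀ x : Fin n, M.Indep {x})
    (r k : ℕ) (hr : ∀ B, M.IsBase B → B.ncard = r) (hk1 : 1 ≤ k) (hkr : k ≤ r)
    (T : Matroid (Fin n)) (hTE : T.E = Set.univ)
    (hTindep : ∀ I, T.Indep I ↔ M.Indep I ∧ I.ncard ≤ k) :
    {S : Set (Fin n) | S.ncard = k ∧ (0 : Fin n) ∈ S ∧ Nbc M S}.ncard =
      {B : Set (Fin n) | T.IsBase B ∧ Nbc T B}.ncard :=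
  nbc_sets_eq_nbc_bases_of_truncation_general M hE r k hr hkr T hTE hTindep
end
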